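/- arXiv:2307.08212 — 2 statements merged into one kernel-verified Lean document; each statement's English description precedes it below -/
import Mathlib

section
/- Consider the hardcore model on a finite simple graph G = (V,E) with fugacity λ > 0. Let t ≥ 1 and let S ⊆ U ⊆ V with |S| ≤ t. Then for every pinning η on V∖U, the conditional distribution μ^η_U on {0,1}^U satisfies {S, U∖S}-factorization of variance with constant C = 2(1+λ)^t; that is, for every function f : {0,1}^U → ℝ, Var_{μ^η_U} f ≤ 2(1+λ)^t · (E[Var_S f] + E[Var_{U∖S} f]), where the conditional variances are taken under μ^η_U. -/
set_option linter.unusedSectionVars false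


open scoped BigOperators Classical

noncomputable section

/-- Expectation of `f` under the (finitely supported) density `p`. -/
def pmean {α : Type*} [Fintype α] (p f : α → ℝ) : ℝ := ∑ a, p a * f a

/-- Variance of `f` under the density `p`. -/
def pvar {α : Type*} [Fintype α] (p f : α → ℝ) : ℝ :=
  pmean p (fun a => (f a - pmean p f) ^ 2)

/-- Entropy of `f` under the density `p` (with the convention `0 log 0 = 0`,
which is automatic since `Real.log 0 = 0`). -/
def pent {α : Type*} [Fintype α] (p f : α → ℝ) : ℝ :=
  pmean p (fun a => f a * Real.log (f a)) - pmean p f * Real.log (pmean p f)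

/-- Total variation distance between two densities. -/
def ptv {α : Type*} [Fintype α] (p q : α → ℝ) : ℝ := (1 / 2) * ∑ a, |p a - q a|

variable {V : Type*} [Fintype V] [DecidableEq V]

/-- `σ : V → Bool` is the indicator of an independent set of `G`. -/
def isIndep (G : SimpleGraph V) (σ : V → Bool) : Prop :=
  ∀ u v, G.Adj u v → ¬(σ u = true ∧ σ v = true)

/-- Hardcore weight: `λ^{|σ|}` on independent-set indicators, `0` otherwise. -/
def hcW (G : SimpleGraph V) (lam : ℝ) (σ : V → Bool) : ℝ :=
  if isIndep G σ then lam ^ (Finset.univ.filter (fun v => σ v = true)).card else 0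

/-- The hardcore Gibbs distribution with fugacity `lam` on `G`. -/
def hcMu (G : SimpleGraph V) (lam : ℝ) : (V → Bool) → ℝ :=
  fun σ => hcW G lam σ / ∑ τ, hcW G lam τ

/-- Probability, under the density `μ`, of agreeing with `η` on the set `Λ`. -/
def prAgree (μ : (V → Bool) → ℝ) (Λ : Finset V) (η : V → Bool) : ℝ :=
  ∑ τ ∈ Finset.univ.filter (fun τ : V → Bool => ∀ v ∈ Λ, τ v = η v), μ τ

/-- The conditional density of `μ` given that the configuration agrees with `σ`
outside the (free) set `B`. -/
def condD (μ : (V → Bool) → ℝ) (B : Finset V) (σ : V → Bool) : (V → Bool) → ℝ :=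
  fun τ => if ∀ v, v ∉ B → τ v = σ v
    then μ τ / ∑ τ' ∈ Finset.univ.filter (fun τ' : V → Bool => ∀ v, v ∉ B → τ' v = σ v), μ τ'
    else 0



def zs (S : Finset V) (σ : V → Bool) : V → Bool := fun v => if v ∈ S then false else σ v

def fset (B : Finset V) (σ : V → Bool) : Finset (V → Bool) :=
  Finset.univ.filter (fun τ : V → Bool => ∀ v, v ∉ B → τ v = σ v)

section generic
variable {α : Type*} [Fintype α]

lemma pvar_nonneg (p f : α → ℝ) (hp : ∀ a, 0 ≤ p a) : 0 ≤ pvar p f :=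
  Finset.sum_nonneg fun a _ => mul_nonneg (hp a) (sq_nonneg _)

lemma pmean_nonneg (p f : α → ℝ) (hp : ∀ a, 0 ≤ p a) (hf : ∀ a, 0 ≤ f a) : 0 ≤ pmean p f :=
  Finset.sum_nonneg fun a _ => mul_nonneg (hp a) (hf a)

lemma pmean_sub_sq (p f : α → ℝ) (hp1 : ∑ a, p a = 1) (c : ℝ) :
    pmean p (fun a => (f a - c)^2) = pvar p f + (pmean p f - c)^2 := by
  simp only [pvar, pmean]
  have expand : ∀ a : α, p a * (f a - c)^2 =
      p a * (f a - ∑ b, p b * f b)^2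
      + (2*((∑ b, p b * f b) - c)) * (p a * f a)
      + (((∑ b, p b * f b)-c)^2 - 2*((∑ b, p b * f b)-c)*(∑ b, p b * f b)) * p a := by
    intro a; ring
  rw [Finset.sum_congr rfl (fun a _ => expand a)]
  rw [Finset.sum_add_distrib, Finset.sum_add_distrib, ← Finset.mul_sum, ← Finset.mul_sum, hp1]
  ring

lemma pvar_le_pmean_sub_sq (p f : α → ℝ) (hp1 : ∑ a, p a = 1) (c : ℝ) :
    pvar p f ≤ pmean p (fun a => (f a - c)^2) := by
  rw [pmean_sub_sq p f hp1 c]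
  nlinarith [sq_nonneg (pmean p f - c)]

lemma mul_pmean_sub_sq_le_pvar (p f : α → ℝ) (hp : ∀ a, 0 ≤ p a) (hp1 : ∑ a, p a = 1)
    (x0 : α) : p x0 * pmean p (fun a => (f a - f x0)^2) ≤ pvar p f := by
  classical
  have hM : pmean p (fun a => (f a - f x0)^2) = pvar p f + (pmean p f - f x0)^2 :=
    pmean_sub_sq p f hp1 (f x0)
  have hd0 : (∑ a, p a * (f a - f x0)) = pmean p f - f x0 := by
    simp only [pmean, mul_sub]
    rw [Finset.sum_sub_distrib, ← Finset.sum_mul, hp1, one_mul]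
  have hd : pmean p f - f x0 = ∑ a ∈ Finset.univ.erase x0, p a * (f a - f x0) := by
    rw [← hd0, Finset.sum_erase _ (by simp)]
  have hcs := Finset.sum_mul_sq_le_sq_mul_sq (Finset.univ.erase x0)
      (fun a => Real.sqrt (p a)) (fun a => Real.sqrt (p a) * (f a - f x0))
  have e1 : ∀ a : α, Real.sqrt (p a) * (Real.sqrt (p a) * (f a - f x0))
      = p a * (f a - f x0) := by
    intro a; rw [← mul_assoc, Real.mul_self_sqrt (hp a)]
  have e2 : ∀ a : α, (Real.sqrt (p a))^2 = p a := fun a => Real.sq_sqrt (hp a)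
  have e3 : ∀ a : α, (Real.sqrt (p a) * (f a - f x0))^2 = p a * (f a - f x0)^2 := by
    intro a; rw [mul_pow, e2]
  simp only [e1, e2, e3] at hcs
  have hsum1 : ∑ a ∈ Finset.univ.erase x0, p a = 1 - p x0 := by
    rw [Finset.sum_erase_eq_sub (Finset.mem_univ x0), hp1]
  have hsum2 : ∑ a ∈ Finset.univ.erase x0, p a * (f a - f x0)^2
      = pmean p (fun a => (f a - f x0)^2) := by
    rw [Finset.sum_erase _ (by simp)]; rfl
  rw [hsum1, hsum2, ← hd] at hcs
  nlinarith [hcs, hM]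

end generic

section hc
variable (G : SimpleGraph V) {lam : ℝ}

lemma hcW_nonneg (hlam : 0 ≤ lam) (σ : V → Bool) : 0 ≤ hcW G lam σ := by
  unfold hcW; split
  · positivity
  · exact le_refl 0

lemma hcW_pos (hlam : 0 < lam) {σ : V → Bool} (h : isIndep G σ) : 0 < hcW G lam σ := by
  unfold hcW; rw [if_pos h]; positivity

lemma isIndep_mono {σ τ : V → Bool} (hle : ∀ v, τ v = true → σ v = true)
    (h : isIndep G σ) : isIndep G τ := by
  intro u v huv hc
  exact h u v huv ⟨hle u hc.1, hle v hc.2⟩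

lemma zs_indep {S : Finset V} {σ : V → Bool} (h : isIndep G σ) : isIndep G (zs S σ) := by
  refine isIndep_mono G (fun v hv => ?_) h
  by_cases hvS : v ∈ S
  · simp [zs, hvS] at hv
  · simpa [zs, hvS] using hv

lemma card_split (S : Finset V) (τ : V → Bool) :
    (Finset.univ.filter (fun v => τ v = true)).card
      = (S.filter (fun v => τ v = true)).card
        + (Finset.univ.filter (fun v => zs S τ v = true)).card := by
  rw [← Finset.card_filter_add_card_filter_not (s := Finset.univ.filter (fun v => τ v = true)) (p := fun v => v ∈ S)]
  congr 1
  · congr 1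
    ext v
    simp [and_comm]
  · congr 1
    ext v
    by_cases hv : v ∈ S <;> simp [zs, hv]

lemma hcW_le_zs (hlam : 0 < lam) (S : Finset V) (τ : V → Bool) :
    hcW G lam τ ≤ lam ^ (S.filter (fun v => τ v = true)).card * hcW G lam (zs S τ) := by
  by_cases h : isIndep G τ
  · have hz := zs_indep G (S := S) h
    unfold hcW
    rw [if_pos h, if_pos hz, ← pow_add, ← card_split]
  · unfold hcW
    rw [if_neg h]
    have : (0:ℝ) ≤ lam ^ (S.filter (fun v => τ v = true)).card := by positivity
    split
    · positivity
    · simp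

lemma sum_pow_fset (hlam : 0 < lam) (S : Finset V) (σ : V → Bool) :
    ∑ τ ∈ fset S σ, lam ^ (S.filter (fun v => τ v = true)).card = (1+lam)^S.card := by
  have hpow : ∑ T ∈ S.powerset, lam ^ T.card = (lam+1)^S.card := by
    have := Finset.prod_add (fun _ : V => lam) (fun _ : V => 1) S
    simp only [Finset.prod_const, Finset.prod_const_one, mul_one, one_pow] at this
    rw [← this]
  rw [show ((1:ℝ)+lam)^S.card = (lam+1)^S.card by ring_nf, ← hpow]
  refine Finset.sum_nbij' (fun τ => S.filter (fun v => τ v = true))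
    (fun T => fun v => if v ∈ S then (if v ∈ T then true else false) else σ v)
    ?_ ?_ ?_ ?_ ?_
  · intro τ _
    exact Finset.mem_powerset.2 (Finset.filter_subset _ _)
  · intro T hT
    simp only [fset, Finset.mem_filter, Finset.mem_univ, true_and]
    intro v hv
    rw [if_neg hv]
  · intro τ hτ
    simp only [fset, Finset.mem_filter, Finset.mem_univ, true_and] at hτ
    funext v
    by_cases hv : v ∈ S
    · rw [if_pos hv]
      rcases Bool.eq_false_or_eq_true (τ v) with h1 | h0
      · rw [if_pos (Finset.mem_filter.2 ⟨hv, h1⟩), h1]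
      · have hnc : v ∉ Finset.filter (fun v => τ v = true) S := by
          simp [Finset.mem_filter, h0]
        rw [if_neg hnc, h0]
    · rw [if_neg hv, hτ v hv]
  · intro T hT
    have hTS := Finset.mem_powerset.1 hT
    ext v
    simp only [Finset.mem_filter]
    constructor
    · rintro ⟨hvS, hv⟩
      rw [if_pos hvS] at hv
      by_cases h : v ∈ T
      · exact h
      · rw [if_neg h] at hv; exact absurd hv (by simp)
    · intro hvT
      have hvS := hTS hvT
      exact ⟨hvS, by rw [if_pos hvS, if_pos hvT]⟩
  · intro τ _
    rfl

lemma WB_le (hlam : 0 < lam) (S : Finset V) (σ : V → Bool) :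
    ∑ τ ∈ fset S σ, hcW G lam τ ≤ (1+lam)^S.card * hcW G lam (zs S σ) := by
  have step : ∀ τ ∈ fset S σ, hcW G lam τ
      ≤ lam ^ (S.filter (fun v => τ v = true)).card * hcW G lam (zs S σ) := by
    intro τ hτ
    have hz : zs S τ = zs S σ := by
      funext v
      simp only [fset, Finset.mem_filter, Finset.mem_univ, true_and] at hτ
      by_cases hv : v ∈ S <;> simp [zs, hv]
      · exact hτ v hv
    rw [← hz]
    exact hcW_le_zs G hlam S τ
  calc ∑ τ ∈ fset S σ, hcW G lam τ
      ≤ ∑ τ ∈ fset S σ, lam ^ (S.filter (fun v => τ v = true)).card * hcW G lam (zs S σ) :=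
        Finset.sum_le_sum step
    _ = (1+lam)^S.card * hcW G lam (zs S σ) := by
        rw [← Finset.sum_mul, sum_pow_fset hlam S σ]

end hc

section cond
variable (w : (V → Bool) → ℝ)

lemma condD_apply (B : Finset V) (σ τ : V → Bool) :
    condD w B σ τ = if ∀ v, v ∉ B → τ v = σ v
      then w τ / ∑ τ' ∈ fset B σ, w τ' else 0 := rfl

lemma condD_nonneg (hw : ∀ σ, 0 ≤ w σ) (B : Finset V) (σ τ : V → Bool) :
    0 ≤ condD w B σ τ := by
  rw [condD_apply]
  split
  · exact div_nonneg (hw τ) (Finset.sum_nonneg fun τ' _ => hw τ')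
  · exact le_refl 0

lemma mem_fset_iff (B : Finset V) (σ τ : V → Bool) :
    τ ∈ fset B σ ↔ ∀ v, v ∉ B → τ v = σ v := by
  simp [fset]

lemma self_mem_fset (B : Finset V) (σ : V → Bool) : σ ∈ fset B σ :=
  (mem_fset_iff B σ σ).2 fun _ _ => rfl

lemma condD_sum_one (B : Finset V) (σ : V → Bool)
    (hpos : (∑ τ' ∈ fset B σ, w τ') ≠ 0) : ∑ τ, condD w B σ τ = 1 := by
  have : ∀ τ : V → Bool, condD w B σ τ
      = if τ ∈ fset B σ then w τ / ∑ τ' ∈ fset B σ, w τ' else 0 := by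
    intro τ
    rw [condD_apply]
    by_cases h : ∀ v, v ∉ B → τ v = σ v
    · rw [if_pos h, if_pos ((mem_fset_iff B σ τ).2 h)]
    · rw [if_neg h, if_neg (fun hc => h ((mem_fset_iff B σ τ).1 hc))]
  rw [Finset.sum_congr rfl (fun τ _ => this τ), Finset.sum_ite_mem,
    Finset.univ_inter, ← Finset.sum_div, div_self hpos]

lemma condD_congr (B : Finset V) {σ σ' : V → Bool} (h : ∀ v, v ∉ B → σ v = σ' v) :
    condD w B σ = condD w B σ' := by
  have hiff : ∀ τ : V → Bool, (∀ v, v ∉ B → τ v = σ v) ↔ (∀ v, v ∉ B → τ v = σ' v) := by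
    intro τ
    constructor <;> intro hτ v hv
    · rw [hτ v hv, h v hv]
    · rw [hτ v hv, ← h v hv]
  have hfs : fset B σ = fset B σ' := by
    ext τ
    rw [mem_fset_iff, mem_fset_iff]
    exact hiff τ
  funext τ
  rw [condD_apply, condD_apply, hfs]
  by_cases hc : ∀ v, v ∉ B → τ v = σ v
  · rw [if_pos hc, if_pos ((hiff τ).1 hc)]
  · rw [if_neg hc, if_neg (fun hc' => hc ((hiff τ).2 hc'))]

lemma tower (hw : ∀ σ, 0 ≤ w σ) {B U : Finset V} (hBU : B ⊆ U) (η τ : V → Bool) :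
    ∑ σ, condD w U η σ * condD w B σ τ = condD w U η τ := by
  classical
  by_cases hwτ : w τ = 0
  · have h1 : condD w U η τ = 0 := by
      rw [condD_apply]; split <;> simp [hwτ]
    have h2 : ∀ σ : V → Bool, condD w B σ τ = 0 := by
      intro σ; rw [condD_apply]; split <;> simp [hwτ]
    simp [h1, h2]
  by_cases hPτ : ∀ v, v ∉ U → τ v = η v
  · -- main case
    have hAτpos : (0:ℝ) < ∑ τ' ∈ fset B τ, w τ' := by
      have hle : w τ ≤ ∑ τ' ∈ fset B τ, w τ' :=
        Finset.single_le_sum (fun τ' _ => hw τ') (self_mem_fset B τ)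
      have := lt_of_le_of_ne (hw τ) (Ne.symm hwτ)
      linarith
    have hPimp : ∀ σ : V → Bool, (∀ v, v ∉ B → τ v = σ v) → (∀ v, v ∉ U → σ v = η v) := by
      intro σ hQ v hv
      rw [← hQ v (fun hc => hv (hBU hc)), hPτ v hv]
    have hfs : ∀ σ : V → Bool, (∀ v, v ∉ B → τ v = σ v) → fset B σ = fset B τ := by
      intro σ hQ
      ext τ'
      rw [mem_fset_iff, mem_fset_iff]
      constructor <;> intro h v hv
      · rw [h v hv, ← hQ v hv]
      · rw [h v hv, hQ v hv]
    have step : ∀ σ : V → Bool, condD w U η σ * condD w B σ τ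
        = (if ∀ v, v ∉ B → τ v = σ v then w σ else 0)
          * (w τ / ((∑ τ' ∈ fset U η, w τ') * (∑ τ' ∈ fset B τ, w τ'))) := by
      intro σ
      by_cases hQ : ∀ v, v ∉ B → τ v = σ v
      · rw [condD_apply, condD_apply, if_pos hQ, if_pos (hPimp σ hQ), if_pos hQ, hfs σ hQ]
        rw [div_mul_div_comm, mul_div_assoc]
      · rw [condD_apply (B := B), if_neg hQ, if_neg hQ, mul_zero, zero_mul]
    rw [Finset.sum_congr rfl (fun σ _ => step σ), ← Finset.sum_mul]
    have hsum : (∑ σ : V → Bool, if ∀ v, v ∉ B → τ v = σ v then w σ else 0)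
        = ∑ τ' ∈ fset B τ, w τ' := by
      rw [← Finset.sum_filter]
      apply Finset.sum_congr _ (fun _ _ => rfl)
      ext σ
      simp only [Finset.mem_filter, Finset.mem_univ, true_and, mem_fset_iff]
      constructor <;> intro h v hv
      · exact (h v hv).symm
      · exact (h v hv).symm
    rw [hsum, condD_apply, if_pos hPτ]
    have hdd : w τ / ((∑ τ' ∈ fset U η, w τ') * (∑ τ' ∈ fset B τ, w τ'))
        = (w τ / (∑ τ' ∈ fset U η, w τ')) / (∑ τ' ∈ fset B τ, w τ') := by
      rw [div_div]
    rw [hdd, mul_comm, div_mul_cancel₀ _ (ne_of_gt hAτpos)]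
  · -- τ does not agree with η outside U
    have h1 : condD w U η τ = 0 := by rw [condD_apply, if_neg hPτ]
    rw [h1]
    apply Finset.sum_eq_zero
    intro σ _
    by_cases hQ : ∀ v, v ∉ B → τ v = σ v
    · have hPσ : ¬ ∀ v, v ∉ U → σ v = η v := by
        intro hPσ
        exact hPτ (fun v hv => by rw [hQ v (fun hc => hv (hBU hc)), hPσ v hv])
      rw [condD_apply (B := U), if_neg hPσ, zero_mul]
    · rw [condD_apply (B := B), if_neg hQ, mul_zero]

lemma tower_pmean (hw : ∀ σ, 0 ≤ w σ) {B U : Finset V} (hBU : B ⊆ U) (η : V → Bool)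
    (h : (V → Bool) → ℝ) :
    pmean (condD w U η) (fun σ => pmean (condD w B σ) h) = pmean (condD w U η) h := by
  simp only [pmean]
  have hexp : ∀ σ : V → Bool, condD w U η σ * ∑ τ, condD w B σ τ * h τ
      = ∑ τ, condD w U η σ * condD w B σ τ * h τ := by
    intro σ
    rw [Finset.mul_sum]
    exact Finset.sum_congr rfl fun τ _ => by ring
  rw [Finset.sum_congr rfl (fun σ _ => hexp σ), Finset.sum_comm]
  exact Finset.sum_congr rfl fun τ _ => by
    rw [← Finset.sum_mul, tower w hw hBU η τ]

end cond

lemma isIndep_of_hcW_pos (G : SimpleGraph V) {lam : ℝ} {σ : V → Bool}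
    (h : 0 < hcW G lam σ) : isIndep G σ := by
  by_contra hc
  unfold hcW at h
  rw [if_neg hc] at h
  exact lt_irrefl 0 h

lemma Z_pos (G : SimpleGraph V) {lam : ℝ} (hlam : 0 < lam) :
    0 < ∑ τ : V → Bool, hcW G lam τ := by
  apply Finset.sum_pos' (fun τ _ => hcW_nonneg G hlam.le τ)
  refine ⟨fun _ => false, Finset.mem_univ _, ?_⟩
  apply hcW_pos G hlam
  intro u v _ hc
  exact Bool.false_ne_true hc.1

lemma condD_hcMu (G : SimpleGraph V) {lam : ℝ} (hlam : 0 < lam) (B : Finset V)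
    (σ : V → Bool) : condD (hcMu G lam) B σ = condD (hcW G lam) B σ := by
  have hZ : (∑ τ : V → Bool, hcW G lam τ) ≠ 0 := (Z_pos G hlam).ne'
  funext τ
  rw [condD_apply, condD_apply]
  by_cases h : ∀ v, v ∉ B → τ v = σ v
  · rw [if_pos h, if_pos h]
    simp only [hcMu]
    rw [← Finset.sum_div, div_div_div_comm, div_self hZ, div_one]
  · rw [if_neg h, if_neg h]

lemma W_pos (G : SimpleGraph V) {lam : ℝ} (hlam : 0 < lam) (U : Finset V) (η : V → Bool)
    (hη : 0 < prAgree (hcMu G lam) Uᶜ η) : 0 < ∑ τ' ∈ fset U η, hcW G lam τ' := by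
  have hset : Finset.univ.filter (fun τ : V → Bool => ∀ v ∈ Uᶜ, τ v = η v) = fset U η := by
    unfold fset
    apply Finset.filter_congr
    intro τ _
    simp [Finset.mem_compl]
  have heq : prAgree (hcMu G lam) Uᶜ η
      = (∑ τ' ∈ fset U η, hcW G lam τ') / ∑ τ : V → Bool, hcW G lam τ := by
    unfold prAgree
    rw [hset, Finset.sum_div]
    rfl
  rw [heq] at hη
  have h2 := mul_pos hη (Z_pos G hlam)
  rwa [div_mul_cancel₀ _ (Z_pos G hlam).ne'] at h2

theorem hardcore_key (G : SimpleGraph V)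
    (lam : ℝ) (hlam : 0 < lam) (t : ℕ)
    (S U : Finset V) (hSU : S ⊆ U) (hS : S.card ≤ t)
    (η : V → Bool) (hW : 0 < ∑ τ' ∈ fset U η, hcW G lam τ')
    (f : (V → Bool) → ℝ) :
    pvar (condD (hcW G lam) U η) f ≤
      2 * (1 + lam) ^ t *
        (pmean (condD (hcW G lam) U η)
            (fun σ => pvar (condD (hcW G lam) S σ) f) +
         pmean (condD (hcW G lam) U η)
            (fun σ => pvar (condD (hcW G lam) (U \ S) σ) f)) := by
  classical
  have hw : ∀ σ : V → Bool, 0 ≤ hcW G lam σ := hcW_nonneg G hlam.le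
  set w : (V → Bool) → ℝ := hcW G lam with hwdef
  set ν : (V → Bool) → ℝ := condD w U η with hνdef
  have hν0 : ∀ σ, 0 ≤ ν σ := condD_nonneg w hw U η
  have hν1 : ∑ σ, ν σ = 1 := condD_sum_one w U η hW.ne'
  have hone : (1:ℝ) ≤ 1 + lam := by linarith
  have hpowle : (1+lam)^S.card ≤ (1+lam)^t := pow_le_pow_right₀ hone hS
  have hpow0 : (0:ℝ) < (1+lam)^S.card := by positivity
  set ρ : (V → Bool) → ℝ := condD w (U \ S) (zs S η) with hρdef
  set c : ℝ := pmean ρ f with hcdef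
  -- support of ν
  have hsupp : ∀ σ : V → Bool, ν σ ≠ 0 → (∀ v, v ∉ U → σ v = η v) ∧ 0 < w σ := by
    intro σ h
    rw [hνdef, condD_apply] at h
    by_cases hP : ∀ v, v ∉ U → σ v = η v
    · refine ⟨hP, ?_⟩
      rcases lt_or_eq_of_le (hw σ) with h' | h'
      · exact h'
      · exact absurd (by rw [if_pos hP, ← h', zero_div]) h
    · exact absurd (if_neg hP) h
  -- positivity of the A-denominator
  obtain ⟨σ0, hσ0mem, hσ0pos⟩ : ∃ σ0 ∈ fset U η, 0 < w σ0 := by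
    by_contra hno
    push_neg at hno
    have : ∑ τ' ∈ fset U η, w τ' = 0 :=
      Finset.sum_eq_zero fun τ' hm => le_antisymm (hno τ' hm) (hw τ')
    rw [this] at hW
    exact lt_irrefl 0 hW
  have hmap : ∀ σ ∈ fset U η, zs S σ ∈ fset (U \ S) (zs S η) := by
    intro σ hσ
    rw [mem_fset_iff] at hσ ⊢
    intro v hv
    by_cases hvS : v ∈ S
    · simp [zs, hvS]
    · have hvU : v ∉ U := fun hvU => hv (Finset.mem_sdiff.2 ⟨hvU, hvS⟩)
      simp only [zs, if_neg hvS]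
      exact hσ v hvU
  have hWA : 0 < ∑ τ' ∈ fset (U \ S) (zs S η), w τ' :=
    lt_of_lt_of_le (hcW_pos G hlam (zs_indep G (isIndep_of_hcW_pos G hσ0pos)))
      (Finset.single_le_sum (fun τ' _ => hw τ') (hmap σ0 hσ0mem))
  have hρ0 : ∀ ζ', 0 ≤ ρ ζ' := condD_nonneg w hw (U \ S) (zs S η)
  have hvarρ : 0 ≤ pvar ρ f := pvar_nonneg ρ f hρ0
  -- Step 1 : local bound for the S-blocks
  have hg1 : ∀ σ : V → Bool, ν σ ≠ 0 →
      pmean (condD w S σ) (fun τ => (f τ - f (zs S τ))^2)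
        ≤ (1+lam)^t * pvar (condD w S σ) f := by
    intro σ hσ
    obtain ⟨hP, hwσ⟩ := hsupp σ hσ
    have hindep : isIndep G σ := isIndep_of_hcW_pos G hwσ
    have hDpos : 0 < ∑ τ' ∈ fset S σ, w τ' :=
      lt_of_lt_of_le hwσ (Finset.single_le_sum (fun τ' _ => hw τ') (self_mem_fset S σ))
    have hp0 : ∀ τ, 0 ≤ condD w S σ τ := condD_nonneg w hw S σ
    have hp1 : ∑ τ, condD w S σ τ = 1 := condD_sum_one w S σ hDpos.ne'
    have hz0 : ∀ v, v ∉ S → zs S σ v = σ v := fun v hv => if_neg hv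
    have hpz : condD w S σ (zs S σ) = w (zs S σ) / ∑ τ' ∈ fset S σ, w τ' := by
      rw [condD_apply, if_pos hz0]
    have hsame : ∀ τ : V → Bool, condD w S σ τ * (f τ - f (zs S τ))^2
        = condD w S σ τ * (f τ - f (zs S σ))^2 := by
      intro τ
      by_cases hQ : ∀ v, v ∉ S → τ v = σ v
      · have hzz : zs S τ = zs S σ := by
          funext v
          by_cases hv : v ∈ S
          · simp [zs, hv]
          · simp only [zs, if_neg hv]
            exact hQ v hv
        rw [hzz]
      · rw [condD_apply, if_neg hQ, zero_mul, zero_mul]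
    have heq : pmean (condD w S σ) (fun τ => (f τ - f (zs S τ))^2)
        = pmean (condD w S σ) (fun τ => (f τ - f (zs S σ))^2) := by
      unfold pmean
      exact Finset.sum_congr rfl fun τ _ => hsame τ
    rw [heq]
    have hkey := mul_pmean_sub_sq_le_pvar (condD w S σ) f hp0 hp1 (zs S σ)
    have hWle : ∑ τ' ∈ fset S σ, w τ' ≤ (1+lam)^S.card * w (zs S σ) := WB_le G hlam S σ
    have hge1 : 1 ≤ (1+lam)^S.card * condD w S σ (zs S σ) := by
      rw [hpz, ← mul_div_assoc, le_div_iff₀ hDpos, one_mul]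
      exact hWle
    have hM0 : 0 ≤ pmean (condD w S σ) (fun τ => (f τ - f (zs S σ))^2) :=
      pmean_nonneg _ _ hp0 (fun τ => sq_nonneg _)
    have hvar0 : 0 ≤ pvar (condD w S σ) f := pvar_nonneg _ _ hp0
    calc pmean (condD w S σ) (fun τ => (f τ - f (zs S σ))^2)
        ≤ ((1+lam)^S.card * condD w S σ (zs S σ))
            * pmean (condD w S σ) (fun τ => (f τ - f (zs S σ))^2) :=
          le_mul_of_one_le_left hM0 hge1
      _ = (1+lam)^S.card * (condD w S σ (zs S σ)
            * pmean (condD w S σ) (fun τ => (f τ - f (zs S σ))^2)) := by ring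
      _ ≤ (1+lam)^S.card * pvar (condD w S σ) f :=
          mul_le_mul_of_nonneg_left hkey hpow0.le
      _ ≤ (1+lam)^t * pvar (condD w S σ) f :=
          mul_le_mul_of_nonneg_right hpowle hvar0
  have hE1 : pmean ν (fun σ => (f σ - f (zs S σ))^2)
      ≤ (1+lam)^t * pmean ν (fun σ => pvar (condD w S σ) f) := by
    rw [show pmean ν (fun σ => (f σ - f (zs S σ))^2)
        = pmean ν (fun σ => pmean (condD w S σ) (fun τ => (f τ - f (zs S τ))^2)) from
      (tower_pmean w hw hSU η _).symm]
    have hrhs : (1+lam)^t * pmean ν (fun σ => pvar (condD w S σ) f)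
        = ∑ σ : V → Bool, ν σ * ((1+lam)^t * pvar (condD w S σ) f) := by
      unfold pmean
      rw [Finset.mul_sum]
      exact Finset.sum_congr rfl fun σ _ => by ring
    rw [hrhs]
    unfold pmean
    apply Finset.sum_le_sum
    intro σ _
    by_cases hσ : ν σ = 0
    · rw [hσ, zero_mul, zero_mul]
    · exact mul_le_mul_of_nonneg_left (hg1 σ hσ) (hν0 σ)
  -- Step 2 : the (U \ S)-block bound
  have hE2a : pmean ν (fun σ => (f (zs S σ) - c)^2)
      = (∑ σ ∈ fset U η, w σ * (f (zs S σ) - c)^2) / (∑ τ' ∈ fset U η, w τ') := by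
    unfold pmean
    rw [Finset.sum_div]
    rw [show fset U η
        = Finset.univ.filter (fun σ : V → Bool => ∀ v, v ∉ U → σ v = η v) from rfl,
      Finset.sum_filter]
    apply Finset.sum_congr rfl
    intro σ _
    rw [hνdef, condD_apply]
    by_cases hP : ∀ v, v ∉ U → σ v = η v
    · rw [if_pos hP, if_pos hP, div_mul_eq_mul_div]
      rfl
    · rw [if_neg hP, if_neg hP, zero_mul]
  have hfib : ∑ σ ∈ fset U η, w σ * (f (zs S σ) - c)^2
      = ∑ ζ' : V → Bool, ∑ σ ∈ (fset U η).filter (fun σ => zs S σ = ζ'),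
          w σ * (f (zs S σ) - c)^2 :=
    (Finset.sum_fiberwise_of_maps_to (fun σ _ => Finset.mem_univ (zs S σ)) _).symm
  have hfiber_eq : ∀ ζ' : V → Bool,
      ∑ σ ∈ (fset U η).filter (fun σ => zs S σ = ζ'), w σ * (f (zs S σ) - c)^2
      = (∑ σ ∈ (fset U η).filter (fun σ => zs S σ = ζ'), w σ) * (f ζ' - c)^2 := by
    intro ζ'
    rw [Finset.sum_mul]
    apply Finset.sum_congr rfl
    intro σ hσ
    rw [(Finset.mem_filter.1 hσ).2]
  have hfiber_le : ∀ ζ' : V → Bool,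
      (∑ σ ∈ (fset U η).filter (fun σ => zs S σ = ζ'), w σ)
        ≤ (1+lam)^S.card * (if ∀ v, v ∉ U \ S → ζ' v = zs S η v then w ζ' else 0) := by
    intro ζ'
    by_cases hζ' : ∀ v, v ∉ U \ S → ζ' v = zs S η v
    · rw [if_pos hζ']
      have hzz : zs S ζ' = ζ' := by
        funext v
        by_cases hv : v ∈ S
        · have hfalse : ζ' v = false := by
            have := hζ' v (fun hc => (Finset.mem_sdiff.1 hc).2 hv)
            simpa [zs, hv] using this
          simp [zs, hv, hfalse]
        · simp [zs, hv]
      have hsub : (fset U η).filter (fun σ => zs S σ = ζ') ⊆ fset S ζ' := by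
        intro σ hσ
        obtain ⟨hσ1, hσ2⟩ := Finset.mem_filter.1 hσ
        rw [mem_fset_iff]
        intro v hv
        rw [← hσ2]
        simp [zs, hv]
      calc (∑ σ ∈ (fset U η).filter (fun σ => zs S σ = ζ'), w σ)
          ≤ ∑ σ ∈ fset S ζ', w σ :=
            Finset.sum_le_sum_of_subset_of_nonneg hsub (fun τ' _ _ => hw τ')
        _ ≤ (1+lam)^S.card * w (zs S ζ') := WB_le G hlam S ζ'
        _ = (1+lam)^S.card * w ζ' := by rw [hzz]
    · rw [if_neg hζ', mul_zero]
      have hempty : (fset U η).filter (fun σ => zs S σ = ζ') = ∅ := by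
        apply Finset.eq_empty_of_forall_notMem
        intro σ hσ
        obtain ⟨hσ1, hσ2⟩ := Finset.mem_filter.1 hσ
        apply hζ'
        intro v hv
        rw [← hσ2]
        by_cases hvS : v ∈ S
        · simp [zs, hvS]
        · have hvU : v ∉ U := fun hc => hv (Finset.mem_sdiff.2 ⟨hc, hvS⟩)
          simp only [zs, if_neg hvS]
          exact (mem_fset_iff U η σ).1 hσ1 v hvU
      rw [hempty, Finset.sum_empty]
  have hsum2 : ∑ ζ' : V → Bool, (if ∀ v, v ∉ U \ S → ζ' v = zs S η v then w ζ' else 0)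
        * (f ζ' - c)^2
      = (∑ τ' ∈ fset (U \ S) (zs S η), w τ') * pvar ρ f := by
    have hpv : pvar ρ f = ∑ ζ' : V → Bool, ρ ζ' * (f ζ' - c)^2 := by
      rw [hcdef]
      rfl
    rw [hpv, Finset.mul_sum]
    apply Finset.sum_congr rfl
    intro ζ' _
    rw [hρdef, condD_apply]
    by_cases hζ' : ∀ v, v ∉ U \ S → ζ' v = zs S η v
    · rw [if_pos hζ', if_pos hζ']
      rw [← mul_assoc, mul_div_cancel₀ _ hWA.ne']
    · rw [if_neg hζ', if_neg hζ', zero_mul, mul_zero]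
  have hRb : (∑ σ ∈ fset U η, w σ * (f (zs S σ) - c)^2)
      ≤ (1+lam)^S.card * ((∑ τ' ∈ fset (U \ S) (zs S η), w τ') * pvar ρ f) := by
    rw [hfib]
    calc ∑ ζ' : V → Bool, ∑ σ ∈ (fset U η).filter (fun σ => zs S σ = ζ'),
            w σ * (f (zs S σ) - c)^2
        = ∑ ζ' : V → Bool, (∑ σ ∈ (fset U η).filter (fun σ => zs S σ = ζ'), w σ)
            * (f ζ' - c)^2 := Finset.sum_congr rfl fun ζ' _ => hfiber_eq ζ'
      _ ≤ ∑ ζ' : V → Bool, ((1+lam)^S.card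
            * (if ∀ v, v ∉ U \ S → ζ' v = zs S η v then w ζ' else 0)) * (f ζ' - c)^2 :=
          Finset.sum_le_sum fun ζ' _ =>
            mul_le_mul_of_nonneg_right (hfiber_le ζ') (sq_nonneg _)
      _ = (1+lam)^S.card * ∑ ζ' : V → Bool,
            (if ∀ v, v ∉ U \ S → ζ' v = zs S η v then w ζ' else 0) * (f ζ' - c)^2 := by
          rw [Finset.mul_sum]
          exact Finset.sum_congr rfl fun ζ' _ => by ring
      _ = (1+lam)^S.card * ((∑ τ' ∈ fset (U \ S) (zs S η), w τ') * pvar ρ f) := by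
          rw [hsum2]
  have hT2 : (∑ τ' ∈ fset (U \ S) (zs S η), w τ') / (∑ τ' ∈ fset U η, w τ') * pvar ρ f
      ≤ pmean ν (fun σ => pvar (condD w (U \ S) σ) f) := by
    have hterm : ∀ σ ∈ fset (U \ S) (zs S η), ν σ * pvar (condD w (U \ S) σ) f
        = w σ / (∑ τ' ∈ fset U η, w τ') * pvar ρ f := by
      intro σ hσ
      have hQ := (mem_fset_iff _ _ σ).1 hσ
      have hcd : condD w (U \ S) σ = ρ := by
        rw [hρdef]
        exact condD_congr w (U \ S) hQ
      have hP : ∀ v, v ∉ U → σ v = η v := by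
        intro v hv
        have hvUS : v ∉ U \ S := fun hc => hv (Finset.mem_sdiff.1 hc).1
        have hvS : v ∉ S := fun hc => hv (hSU hc)
        have := hQ v hvUS
        simpa [zs, hvS] using this
      rw [hcd, hνdef, condD_apply, if_pos hP]
    calc (∑ τ' ∈ fset (U \ S) (zs S η), w τ') / (∑ τ' ∈ fset U η, w τ') * pvar ρ f
        = ∑ σ ∈ fset (U \ S) (zs S η), w σ / (∑ τ' ∈ fset U η, w τ') * pvar ρ f := by
          rw [Finset.sum_div, Finset.sum_mul]
      _ = ∑ σ ∈ fset (U \ S) (zs S η), ν σ * pvar (condD w (U \ S) σ) f :=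
          (Finset.sum_congr rfl hterm).symm
      _ ≤ ∑ σ : V → Bool, ν σ * pvar (condD w (U \ S) σ) f :=
          Finset.sum_le_sum_of_subset_of_nonneg (Finset.subset_univ _)
            (fun σ _ _ => mul_nonneg (hν0 σ)
              (pvar_nonneg _ _ (condD_nonneg w hw _ σ)))
      _ = pmean ν (fun σ => pvar (condD w (U \ S) σ) f) := rfl
  have hT2nonneg : 0 ≤ (∑ τ' ∈ fset (U \ S) (zs S η), w τ')
      / (∑ τ' ∈ fset U η, w τ') * pvar ρ f :=
    mul_nonneg (div_nonneg hWA.le hW.le) hvarρ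
  have hE2 : pmean ν (fun σ => (f (zs S σ) - c)^2)
      ≤ (1+lam)^t * pmean ν (fun σ => pvar (condD w (U \ S) σ) f) := by
    rw [hE2a]
    have h1 : (∑ σ ∈ fset U η, w σ * (f (zs S σ) - c)^2) / (∑ τ' ∈ fset U η, w τ')
        ≤ (1+lam)^S.card * ((∑ τ' ∈ fset (U \ S) (zs S η), w τ')
            / (∑ τ' ∈ fset U η, w τ') * pvar ρ f) := by
      calc (∑ σ ∈ fset U η, w σ * (f (zs S σ) - c)^2) / (∑ τ' ∈ fset U η, w τ')
          ≤ ((1+lam)^S.card * ((∑ τ' ∈ fset (U \ S) (zs S η), w τ') * pvar ρ f))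
              / (∑ τ' ∈ fset U η, w τ') := by gcongr
        _ = (1+lam)^S.card * ((∑ τ' ∈ fset (U \ S) (zs S η), w τ')
              / (∑ τ' ∈ fset U η, w τ') * pvar ρ f) := by ring
    refine le_trans h1 ?_
    calc (1+lam)^S.card * ((∑ τ' ∈ fset (U \ S) (zs S η), w τ')
            / (∑ τ' ∈ fset U η, w τ') * pvar ρ f)
        ≤ (1+lam)^S.card * pmean ν (fun σ => pvar (condD w (U \ S) σ) f) :=
          mul_le_mul_of_nonneg_left hT2 hpow0.le
      _ ≤ (1+lam)^t * pmean ν (fun σ => pvar (condD w (U \ S) σ) f) :=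
          mul_le_mul_of_nonneg_right hpowle (le_trans hT2nonneg hT2)
  -- Step 0 and the split
  have hstep0 : pvar ν f ≤ pmean ν (fun σ => (f σ - c)^2) :=
    pvar_le_pmean_sub_sq ν f hν1 c
  have hsplit : pmean ν (fun σ => (f σ - c)^2)
      ≤ 2 * pmean ν (fun σ => (f σ - f (zs S σ))^2)
        + 2 * pmean ν (fun σ => (f (zs S σ) - c)^2) := by
    have hpt : ∀ σ : V → Bool,
        (f σ - c)^2 ≤ 2*(f σ - f (zs S σ))^2 + 2*(f (zs S σ) - c)^2 := by
      intro σ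
      nlinarith [sq_nonneg (f σ - 2 * f (zs S σ) + c)]
    have hle : pmean ν (fun σ => (f σ - c)^2)
        ≤ pmean ν (fun σ => 2*(f σ - f (zs S σ))^2 + 2*(f (zs S σ) - c)^2) := by
      unfold pmean
      exact Finset.sum_le_sum fun σ _ =>
        mul_le_mul_of_nonneg_left (hpt σ) (hν0 σ)
    refine le_trans hle (le_of_eq ?_)
    unfold pmean
    rw [Finset.mul_sum, Finset.mul_sum, ← Finset.sum_add_distrib]
    exact Finset.sum_congr rfl fun σ _ => by ring
  have hgoal : 2 * (1 + lam) ^ t *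
      (pmean ν (fun σ => pvar (condD w S σ) f)
        + pmean ν (fun σ => pvar (condD w (U \ S) σ) f))
      = 2 * ((1+lam)^t * pmean ν (fun σ => pvar (condD w S σ) f))
        + 2 * ((1+lam)^t * pmean ν (fun σ => pvar (condD w (U \ S) σ) f)) := by ring
  rw [hgoal]
  linarith [hE1, hE2, hstep0, hsplit]


/-- **Block factorization of variance for the hardcore model.**
For `S ⊆ U ⊆ V` with `|S| ≤ t` and any pinning `η` on `V ∖ U`, the conditional hardcore
distribution `μ^η_U` satisfies `{S, U∖S}`-factorization of variance with constant
`2(1+λ)^t`. -/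
theorem hardcore_block_factorization_of_variance
    {V : Type*} [Fintype V] [DecidableEq V] (G : SimpleGraph V)
    (lam : ℝ) (hlam : 0 < lam) (t : ℕ) (ht : 1 ≤ t)
    (S U : Finset V) (hSU : S ⊆ U) (hS : S.card ≤ t)
    (η : V → Bool) (hη : 0 < prAgree (hcMu G lam) Uᶜ η)
    (f : (V → Bool) → ℝ) :
    pvar (condD (hcMu G lam) U η) f ≤
      2 * (1 + lam) ^ t *
        (pmean (condD (hcMu G lam) U η)
            (fun σ => pvar (condD (hcMu G lam) S σ) f) +
         pmean (condD (hcMu G lam) U η)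
            (fun σ => pvar (condD (hcMu G lam) (U \ S) σ) f)) := by
  have hW : 0 < ∑ τ' ∈ fset U η, hcW G lam τ' := W_pos G hlam U η hη
  have hmuc : ∀ (B : Finset V) (σ : V → Bool),
      condD (hcMu G lam) B σ = condD (hcW G lam) B σ := condD_hcMu G hlam
  simp only [hmuc]
  exact hardcore_key G lam hlam t S U hSU hS η hW f

end
end

section
/- Suppose there exists ε ≥ 0 such that |π_X^y(x)/π_X(x) − 1| ≤ ε for all x ∈ 𝒳 and y ∈ 𝒴 (equivalently, (1−ε)π_X(x)π_Y(y) ≤ π(x,y) ≤ (1+ε)π_X(x)π_Y(y) for all x, y). Let f : 𝒳 × 𝒴 → ℝ≥0 satisfy E f = 1, and define the probability distribution ν on 𝒳 × 𝒴 by ν(x,y) = π(x,y) f(x,y), with marginals ν_X and ν_Y. Then E[(E_X f − 1)(E_Y f − 1)] ≤ 4ε · d_TV(ν_X, π_X) · d_TV(ν_Y, π_Y), where E_X f denotes the function y ↦ E_X^y f and E_Y f the function x ↦ E_Y^x f, and the left-hand expectation is under π. -/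
open scoped BigOperators Classical

noncomputable section

/-- Marginal on the first coordinate. -/
def margX {X Y : Type*} [Fintype X] [Fintype Y] (π : X × Y → ℝ) : X → ℝ :=
  fun x => ∑ y, π (x, y)

/-- Marginal on the second coordinate. -/
def margY {X Y : Type*} [Fintype X] [Fintype Y] (π : X × Y → ℝ) : Y → ℝ :=
  fun y => ∑ x, π (x, y)

/-- Conditional distribution of the first coordinate given the second equals `y`. -/
def condX {X Y : Type*} [Fintype X] [Fintype Y] (π : X × Y → ℝ) (y : Y) : X → ℝ :=
  fun x => π (x, y) / margY π y

/-- Conditional distribution of the second coordinate given the first equals `x`. -/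
def condY {X Y : Type*} [Fintype X] [Fintype Y] (π : X × Y → ℝ) (x : X) : Y → ℝ :=
  fun y => π (x, y) / margX π x

/-!
Write `u x = E_Y^x f - 1` and `v y = E_X^y f - 1`. Then `π_X u = ν_X - π_X` and `π_Y v = ν_Y - π_Y`, so
`u` is centred under `π_X`, and the weighted `L¹` norms `∑ π_X |u|`, `∑ π_Y |v|` are twice the two
total variation distances. Because `u` is centred, `u ⊗ v` integrates to zero under `π_X ⊗ π_Y`,
so `E_π[v u] = ∑ (π - π_X π_Y) v u`, and the weak-correlation condition
`|π - π_X π_Y| ≤ ε π_X π_Y` bounds this by `ε (∑ π_X |u|) (∑ π_Y |v|)`.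
-/

open Finset

section

variable {X Y : Type*} [Fintype X] [Fintype Y]

theorem sum_mul_mul_le_of_abs_sub_mul_le (p : X × Y → ℝ) (a : X → ℝ) (b : Y → ℝ) (ε : ℝ)
    (hp : ∀ x y, |p (x, y) - a x * b y| ≤ ε * (a x * b y))
    (u : X → ℝ) (v : Y → ℝ) (hu : ∑ x, a x * u x = 0) :
    ∑ z, p z * (v z.2 * u z.1) ≤ ε * (∑ x, a x * |u x|) * ∑ y, b y * |v y| := by
  have hcross : ∑ z : X × Y, a z.1 * b z.2 * (v z.2 * u z.1) = 0 := by
    calc ∑ z : X × Y, a z.1 * b z.2 * (v z.2 * u z.1)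
        = (∑ x, a x * u x) * ∑ y, b y * v y := by
          rw [sum_mul_sum, Fintype.sum_prod_type]
          exact sum_congr rfl fun x _ => sum_congr rfl fun y _ => by ring
      _ = 0 := by rw [hu, zero_mul]
  calc ∑ z, p z * (v z.2 * u z.1)
      = ∑ z : X × Y, (p z - a z.1 * b z.2) * (v z.2 * u z.1) := by
        simp only [sub_mul, sum_sub_distrib, hcross, sub_zero]
    _ ≤ ∑ z : X × Y, ε * (a z.1 * b z.2) * (|v z.2| * |u z.1|) := by
        refine sum_le_sum fun z _ => (le_abs_self _).trans ?_
        rw [abs_mul, abs_mul]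
        exact mul_le_mul_of_nonneg_right (hp z.1 z.2) (by positivity)
    _ = ε * (∑ x, a x * |u x|) * ∑ y, b y * |v y| := by
        rw [mul_assoc, sum_mul_sum, Fintype.sum_prod_type]
        simp only [mul_sum]
        exact sum_congr rfl fun x _ => sum_congr rfl fun y _ => by ring

theorem two_mul_ptv {α : Type*} [Fintype α] (p q : α → ℝ) :
    2 * ptv p q = ∑ a, |p a - q a| := by
  rw [ptv]
  ring

theorem sum_margX (π : X × Y → ℝ) : ∑ x, margX π x = ∑ z, π z :=
  (Fintype.sum_prod_type π).symm

theorem abs_sub_margX_mul_margY_le {π : X × Y → ℝ} {x : X} {y : Y} {ε : ℝ}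
    (hx : 0 < margX π x) (hy : 0 < margY π y)
    (hcorr : |condX π y x / margX π x - 1| ≤ ε) :
    |π (x, y) - margX π x * margY π y| ≤ ε * (margX π x * margY π y) := by
  have hxy := mul_pos hx hy
  have hrel : condX π y x / margX π x - 1
      = (π (x, y) - margX π x * margY π y) / (margX π x * margY π y) := by
    rw [condX]
    field_simp
  rwa [hrel, abs_div, abs_of_pos hxy, div_le_iff₀ hxy] at hcorr

theorem margX_mul_pmean_condY {π : X × Y → ℝ} {x : X} (hx : margX π x ≠ 0) (f : X × Y → ℝ) :
    margX π x * pmean (condY π x) (fun y => f (x, y)) = margX (fun z => π z * f z) x := by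
  rw [pmean, mul_sum]
  exact sum_congr rfl fun y _ => by rw [condY]; field_simp

theorem sum_margX_mul_pmean_condY_sub_one {π : X × Y → ℝ} (hX : ∀ x, 0 < margX π x)
    {f : X × Y → ℝ} (hf : pmean π f = ∑ z, π z) :
    ∑ x, margX π x * (pmean (condY π x) (fun y => f (x, y)) - 1) = 0 := by
  simp only [mul_sub_one, margX_mul_pmean_condY (hX _).ne', sum_sub_distrib, sum_margX]
  rw [← hf, pmean, sub_self]

theorem sum_margX_mul_abs_pmean_condY_sub_one {π : X × Y → ℝ} (hX : ∀ x, 0 < margX π x)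
    (f : X × Y → ℝ) :
    ∑ x, margX π x * |pmean (condY π x) (fun y => f (x, y)) - 1|
      = 2 * ptv (margX fun z => π z * f z) (margX π) := by
  rw [two_mul_ptv]
  refine sum_congr rfl fun x _ => ?_
  rw [← margX_mul_pmean_condY (hX x).ne', ← mul_sub_one, abs_mul, abs_of_pos (hX x)]

theorem sum_margY_mul_abs_pmean_condX_sub_one {π : X × Y → ℝ} (hY : ∀ y, 0 < margY π y)
    (f : X × Y → ℝ) :
    ∑ y, margY π y * |pmean (condX π y) (fun x => f (x, y)) - 1|
      = 2 * ptv (margY fun z => π z * f z) (margY π) :=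
  -- `margX` and `condY` of `π ∘ Prod.swap` unfold to `margY` and `condX` of `π`.
  sum_margX_mul_abs_pmean_condY_sub_one (π := π ∘ Prod.swap) hY (f ∘ Prod.swap)

end

theorem cov_le_four_eps_tv_mul_tv_general
    {X Y : Type*} [Fintype X] [Fintype Y]
    (π : X × Y → ℝ) (hsum : ∑ z, π z = 1)
    (hX : ∀ x, 0 < margX π x) (hY : ∀ y, 0 < margY π y)
    (ε : ℝ)
    (hcorr : ∀ y x, |condX π y x / margX π x - 1| ≤ ε)
    (f : X × Y → ℝ) (hEf : pmean π f = 1) :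
    pmean π (fun z =>
        (pmean (condX π z.2) (fun x => f (x, z.2)) - 1) *
        (pmean (condY π z.1) (fun y => f (z.1, y)) - 1)) ≤
      4 * ε * ptv (margX (fun z => π z * f z)) (margX π) *
        ptv (margY (fun z => π z * f z)) (margY π) := by
  have hcentred := sum_margX_mul_pmean_condY_sub_one hX (f := f) (hEf.trans hsum.symm)
  have hmain := sum_mul_mul_le_of_abs_sub_mul_le π (margX π) (margY π) ε
    (fun x y => abs_sub_margX_mul_margY_le (hX x) (hY y) (hcorr y x)) _
    (fun y => pmean (condX π y) (fun x => f (x, y)) - 1) hcentred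
  rw [sum_margX_mul_abs_pmean_condY_sub_one hX, sum_margY_mul_abs_pmean_condX_sub_one hY] at hmain
  exact hmain.trans_eq (by ring)

/-- Under the weak-correlation condition `|π_X^y(x)/π_X(x) − 1| ≤ ε`, for `f ≥ 0`
with `E f = 1` and `ν = f·π`,
`E[(E_X f − 1)(E_Y f − 1)] ≤ 4ε · d_TV(ν_X, π_X) · d_TV(ν_Y, π_Y)`. -/
theorem cov_le_four_eps_tv_mul_tv
    {X Y : Type*} [Fintype X] [Fintype Y] [Nonempty X] [Nonempty Y]
    (π : X × Y → ℝ) (hnn : ∀ z, 0 ≤ π z) (hsum : ∑ z, π z = 1)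
    (hX : ∀ x, 0 < margX π x) (hY : ∀ y, 0 < margY π y)
    (ε : ℝ) (hε0 : 0 ≤ ε)
    (hcorr : ∀ y x, |condX π y x / margX π x - 1| ≤ ε)
    (f : X × Y → ℝ) (hf : ∀ z, 0 ≤ f z) (hEf : pmean π f = 1) :
    pmean π (fun z =>
        (pmean (condX π z.2) (fun x => f (x, z.2)) - 1) *
        (pmean (condY π z.1) (fun y => f (z.1, y)) - 1)) ≤
      4 * ε * ptv (margX (fun z => π z * f z)) (margX π) *
        ptv (margY (fun z => π z * f z)) (margY π) :=
  cov_le_four_eps_tv_mul_tv_general π hsum hX hY ε hcorr f hEf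
end
end
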